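/- Closed-form solution of the perturbation linear system in the generalized UCB1 case (Corollary 3): let K ≥ 2, let n⋆_{1,T}, ..., n⋆_{K,T} > 0, f(T) > 0, and ε_1, ..., ε_K ∈ ℝ. Substituting I'_{k,1} = 1 and I'_{k,2} = −(1/2)(n⋆_{k,T})^{-3/2} f(T) in the perturbation linear system, its unique solution is ω_1 = (2/f(T)) · (1 + Σ_{k=2}^K (n⋆_{k,T}/n⋆_{1,T})^{3/2})^{-1} · Σ_{k=2}^K (n⋆_{k,T})^{3/2} (ε_1 − ε_k) and, for i = 2, ..., K, ω_i = (2/f(T)) (n⋆_{i,T})^{3/2} (ε_i − ε_1) + (n⋆_{i,T}/n⋆_{1,T})^{3/2} ω_1. -/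

import Mathlib

/-!
Solving the `k`-th equation (`k ≠ 1`) for `ω_k` gives `ω_k = b_k + r_k ω_1` with
`b_k = (2/f(T)) (n⋆_k)^{3/2} (ε_k − ε_1)` and `r_k = (n⋆_k/n⋆_1)^{3/2} ≥ 0`. The constraint
`Σ ω_k = 0` then reads `(1 + Σ r_k) ω_1 = −Σ b_k`, which determines `ω_1` because
`1 + Σ r_k > 0`.
-/

noncomputable section

/-- The conjectured solution of the perturbation linear system in the generalized UCB1
case (`I'_{k,1} = 1`, `I'_{k,2} = −(1/2)(n⋆_{k,T})^{-3/2}·f(T)`), where arm `1` is the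
index `0 : Fin K` and `F = f(T)`:
`ω_1 = (2/F)·(1 + Σ_{k≠1}(n_k/n_1)^{3/2})⁻¹·Σ_{k≠1}(n_k)^{3/2}(ε_1 − ε_k)` and, for
`i ≠ 1`, `ω_i = (2/F)(n_i)^{3/2}(ε_i − ε_1) + (n_i/n_1)^{3/2}·ω_1`. -/
def ucbOmegaSol (K : ℕ) [NeZero K] (n : Fin K → ℝ) (F : ℝ) (ε : Fin K → ℝ) :
    Fin K → ℝ := fun i =>
  let w0 : ℝ :=
    2 / F * (1 + ∑ k ∈ Finset.univ.erase (0 : Fin K), (n k / n 0) ^ ((3 : ℝ) / 2))⁻¹ *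
      ∑ k ∈ Finset.univ.erase (0 : Fin K), n k ^ ((3 : ℝ) / 2) * (ε 0 - ε k)
  if i = 0 then w0
  else 2 / F * n i ^ ((3 : ℝ) / 2) * (ε i - ε 0) + (n i / n 0) ^ ((3 : ℝ) / 2) * w0

open Finset

section StarSystem

variable {ι : Type*} [Fintype ι] [DecidableEq ι] (i₀ : ι) (b r : ι → ℝ)

theorem sum_eq_of_forall_ne_eq_add_mul {w : ι → ℝ}
    (hw : ∀ k ≠ i₀, w k = b k + r k * w i₀) :
    ∑ k, w k = w i₀ * (1 + ∑ k ∈ univ.erase i₀, r k) + ∑ k ∈ univ.erase i₀, b k := by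
  rw [← add_sum_erase _ w (mem_univ i₀),
    sum_congr rfl fun k hk => hw k (ne_of_mem_erase hk), sum_add_distrib, ← sum_mul]
  ring

def starSolution : ι → ℝ := fun i =>
  let c := -(∑ k ∈ univ.erase i₀, b k) / (1 + ∑ k ∈ univ.erase i₀, r k)
  if i = i₀ then c else b i + r i * c

theorem sum_eq_zero_and_forall_ne_eq_add_mul_iff (hr : 1 + ∑ k ∈ univ.erase i₀, r k ≠ 0)
    (w : ι → ℝ) :
    ((∑ k, w k) = 0 ∧ ∀ k ≠ i₀, w k = b k + r k * w i₀) ↔ w = starSolution i₀ b r := by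
  have hsol₀ : starSolution i₀ b r i₀ =
      -(∑ k ∈ univ.erase i₀, b k) / (1 + ∑ k ∈ univ.erase i₀, r k) := by
    simp [starSolution]
  have hsol : ∀ k ≠ i₀, starSolution i₀ b r k = b k + r k * starSolution i₀ b r i₀ := by
    intro k hk
    simp [starSolution, hk]
  constructor
  · rintro ⟨hsum, hw⟩
    have hw₀ : w i₀ = starSolution i₀ b r i₀ := by
      rw [sum_eq_of_forall_ne_eq_add_mul i₀ b r hw] at hsum
      rw [hsol₀, eq_div_iff hr]
      linarith
    funext k
    by_cases hk : k = i₀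
    · rw [hk, hw₀]
    · rw [hw k hk, hsol k hk, hw₀]
  · rintro rfl
    refine ⟨?_, hsol⟩
    rw [sum_eq_of_forall_ne_eq_add_mul i₀ b r hsol, hsol₀, div_mul_cancel₀ _ hr]
    ring

end StarSystem

theorem ucb_equation_iff {n₀ nₖ F w₀ wₖ e₀ eₖ : ℝ} (hn₀ : 0 < n₀) (hnₖ : 0 < nₖ) (hF : F ≠ 0) :
    -(-(1 / 2) * n₀ ^ (-(3 : ℝ) / 2) * F) * w₀ + (-(1 / 2) * nₖ ^ (-(3 : ℝ) / 2) * F) * wₖ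
        = 1 * e₀ - 1 * eₖ ↔
      wₖ = 2 / F * nₖ ^ ((3 : ℝ) / 2) * (eₖ - e₀) + (nₖ / n₀) ^ ((3 : ℝ) / 2) * w₀ := by
  have ha₀ : n₀ ^ ((3 : ℝ) / 2) ≠ 0 := (Real.rpow_pos_of_pos hn₀ _).ne'
  have haₖ : nₖ ^ ((3 : ℝ) / 2) ≠ 0 := (Real.rpow_pos_of_pos hnₖ _).ne'
  rw [neg_div, Real.rpow_neg hn₀.le, Real.rpow_neg hnₖ.le, Real.div_rpow hnₖ.le hn₀.le]
  field_simp
  constructor <;> intro h <;> linear_combination -h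

theorem ucbOmegaSol_eq_starSolution (K : ℕ) [NeZero K] (n : Fin K → ℝ) (F : ℝ)
    (ε : Fin K → ℝ) :
    ucbOmegaSol K n F ε = starSolution 0 (fun k => 2 / F * n k ^ ((3 : ℝ) / 2) * (ε k - ε 0))
      (fun k => (n k / n 0) ^ ((3 : ℝ) / 2)) := by
  have hc : ∀ S : ℝ,
      -(∑ k ∈ univ.erase 0, 2 / F * n k ^ ((3 : ℝ) / 2) * (ε k - ε 0)) / (1 + S) =
      2 / F * (1 + S)⁻¹ * ∑ k ∈ univ.erase 0, n k ^ ((3 : ℝ) / 2) * (ε 0 - ε k) := by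
    intro S
    simp only [mul_assoc, ← mul_sum, ← sum_neg_distrib, ← mul_neg, neg_sub]
    ring
  funext i
  simp only [ucbOmegaSol, starSolution, hc]

theorem ucb_perturbation_linear_system_solution_general (K : ℕ) [NeZero K]
    (n : Fin K → ℝ) (hn : ∀ k, 0 < n k) (F : ℝ) (hF : 0 < F) (ε : Fin K → ℝ) :
    ((∑ k, ucbOmegaSol K n F ε k) = 0 ∧
      ∀ k : Fin K, k ≠ 0 →
        -(-(1 / 2) * n 0 ^ (-(3 : ℝ) / 2) * F) * ucbOmegaSol K n F ε 0 +
            (-(1 / 2) * n k ^ (-(3 : ℝ) / 2) * F) * ucbOmegaSol K n F ε k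
          = 1 * ε 0 - 1 * ε k) ∧
    ∀ w : Fin K → ℝ,
      ((∑ k, w k) = 0 ∧
        ∀ k : Fin K, k ≠ 0 →
          -(-(1 / 2) * n 0 ^ (-(3 : ℝ) / 2) * F) * w 0 +
              (-(1 / 2) * n k ^ (-(3 : ℝ) / 2) * F) * w k
            = 1 * ε 0 - 1 * ε k) →
      w = ucbOmegaSol K n F ε := by
  have hr : 1 + ∑ k ∈ univ.erase 0, (n k / n 0) ^ ((3 : ℝ) / 2) ≠ 0 := by
    have hS : 0 ≤ ∑ k ∈ univ.erase 0, (n k / n 0) ^ ((3 : ℝ) / 2) :=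
      sum_nonneg fun k _ => Real.rpow_nonneg (div_nonneg (hn k).le (hn 0).le) _
    positivity
  have hsystem : ∀ w : Fin K → ℝ, ((∑ k, w k) = 0 ∧ ∀ k : Fin K, k ≠ 0 →
      -(-(1 / 2) * n 0 ^ (-(3 : ℝ) / 2) * F) * w 0 +
        (-(1 / 2) * n k ^ (-(3 : ℝ) / 2) * F) * w k = 1 * ε 0 - 1 * ε k) ↔
      w = ucbOmegaSol K n F ε := by
    intro w
    simp only [ucb_equation_iff (hn 0) (hn _) hF.ne']
    rw [ucbOmegaSol_eq_starSolution]
    exact sum_eq_zero_and_forall_ne_eq_add_mul_iff 0 _ _ hr w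
  exact ⟨(hsystem _).2 rfl, fun w hw => (hsystem w).1 hw⟩

/-- **Corollary 3 (closed-form solution of the perturbation linear system in the
generalized UCB1 case).** For `K ≥ 2`, fluid approximations `n⋆_{k,T} > 0`, `f(T) > 0`
and `ε_1, ..., ε_K ∈ ℝ`, substituting `I'_{k,1} = 1` and
`I'_{k,2} = −(1/2)(n⋆_{k,T})^{-3/2}·f(T)` in the perturbation linear system
(`Σ_k ω_k = 0` and `−I'_{1,2}ω_1 + I'_{k,2}ω_k = I'_{1,1}ε_1 − I'_{k,1}ε_k` for `k ≠ 1`),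
its unique solution is given by the closed-form formulas `ucbOmegaSol`. -/
theorem ucb_perturbation_linear_system_solution (K : ℕ) [NeZero K] (hK : 2 ≤ K)
    (n : Fin K → ℝ) (hn : ∀ k, 0 < n k) (F : ℝ) (hF : 0 < F) (ε : Fin K → ℝ) :
    ((∑ k, ucbOmegaSol K n F ε k) = 0 ∧
      ∀ k : Fin K, k ≠ 0 →
        -(-(1 / 2) * n 0 ^ (-(3 : ℝ) / 2) * F) * ucbOmegaSol K n F ε 0 +
            (-(1 / 2) * n k ^ (-(3 : ℝ) / 2) * F) * ucbOmegaSol K n F ε k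
          = 1 * ε 0 - 1 * ε k) ∧
    ∀ w : Fin K → ℝ,
      ((∑ k, w k) = 0 ∧
        ∀ k : Fin K, k ≠ 0 →
          -(-(1 / 2) * n 0 ^ (-(3 : ℝ) / 2) * F) * w 0 +
              (-(1 / 2) * n k ^ (-(3 : ℝ) / 2) * F) * w k
            = 1 * ε 0 - 1 * ε k) →
      w = ucbOmegaSol K n F ε :=
  ucb_perturbation_linear_system_solution_general K n hn F hF ε
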